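/- arXiv:1710.03132 — 6 statements merged into one kernel-verified Lean document; each statement's English description precedes it below -/
import Mathlib

section
/- With h as above (type t < n), the sublevel set Ω = { x ∈ (ℝ_{>0})^t × ℝ^{n-t} : h(x) ≤ 0 } is a closed, unbounded, convex subset of ℝⁿ. -/
open Real Set Finset

/-- The sublevel set `Ω = {x ∈ V : h(x) ≤ 0}` of the horofunction
`h(x) = -x_{t+1} - ∑_{i=1}^{t} ψᵢ log xᵢ + (1/2) ∑_{i=t+2}^{n} xᵢ²`
(type t < n, ψ₁ ≥ ... ≥ ψₜ > 0 = ψ_{t+1} = ... = ψₙ)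
is a closed, unbounded, convex subset of ℝⁿ. -/
theorem sublevel_set_closed_unbounded_convex
    (n t : ℕ) (ht : t < n) (ψ : Fin n → ℝ)
    (hmono : ∀ i j : Fin n, i ≤ j → ψ j ≤ ψ i)
    (hpos : ∀ i : Fin n, (i : ℕ) < t → 0 < ψ i)
    (hzero : ∀ i : Fin n, t ≤ (i : ℕ) → ψ i = 0) :
    let h : (Fin n → ℝ) → ℝ := fun x =>
      -x ⟨t, ht⟩
        - ∑ i : Fin n, (if (i : ℕ) < t then ψ i * Real.log (x i) else 0)
        + (1/2) * ∑ i : Fin n, (if t + 1 ≤ (i : ℕ) then (x i) ^ 2 else 0)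
    let Ω : Set (Fin n → ℝ) := {x | (∀ i : Fin n, (i : ℕ) < t → 0 < x i) ∧ h x ≤ 0}
    IsClosed Ω ∧ ¬ Bornology.IsBounded Ω ∧ Convex ℝ Ω := by
  intro h Ω
  have hψ0 : ∀ i : Fin n, 0 ≤ ψ i := by
    intro i
    by_cases hi : (i : ℕ) < t
    · exact (hpos i hi).le
    · exact (hzero i (le_of_not_gt hi)).ge
  refine ⟨?_, ?_, ?_⟩
  · -- Closedness
    apply isClosed_of_closure_subset
    intro x hx
    set M : ℝ := ‖x‖ + 2 with hM
    have hMpos : (0:ℝ) < M := by positivity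
    set L : ℝ := max (Real.log M) 0 with hL
    have hL0 : 0 ≤ L := le_max_right _ _
    set T : ℝ := ∑ j : Fin n, ψ j with hT
    have hT0 : 0 ≤ T := Finset.sum_nonneg fun j _ => hψ0 j
    set ε : Fin n → ℝ := fun i => Real.exp (-(M + T * L) / ψ i) with hε
    -- the closed set C
    set K : Set (Fin n → ℝ) := {y | ∀ i : Fin n, (i : ℕ) < t → ε i ≤ y i} with hK
    have hKclosed : IsClosed K := by
      have : K = ⋂ i : Fin n, ⋂ _ : (i : ℕ) < t, (fun y : Fin n → ℝ => y i) ⁻¹' Ici (ε i) := by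
        ext y; simp [hK, Set.mem_iInter]
      rw [this]
      exact isClosed_iInter fun i => isClosed_iInter fun _ =>
        IsClosed.preimage (continuous_apply i) isClosed_Ici
    have hcontOn : ContinuousOn h K := by
      intro y hy
      apply ContinuousAt.continuousWithinAt
      have h1 : ContinuousAt (fun y : Fin n → ℝ => -y ⟨t, ht⟩) y :=
        ((continuous_apply _).continuousAt).neg
      have h2 : ContinuousAt (fun y : Fin n → ℝ =>
          ∑ i : Fin n, (if (i : ℕ) < t then ψ i * Real.log (y i) else 0)) y := by
        apply tendsto_finset_sum
        intro i _
        by_cases hi : (i : ℕ) < t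
        · simp only [hi, if_true]
          have hyi : y i ≠ 0 := by
            have := hy i hi
            have : 0 < y i := lt_of_lt_of_le (Real.exp_pos _) this
            exact this.ne'
          exact continuousAt_const.mul
            ((continuous_apply i).continuousAt.log hyi)
        · simp only [hi, if_false]; exact continuousAt_const
      have h3 : ContinuousAt (fun y : Fin n → ℝ =>
          (1/2 : ℝ) * ∑ i : Fin n, (if t + 1 ≤ (i : ℕ) then (y i) ^ 2 else 0)) y := by
        apply continuousAt_const.mul
        apply tendsto_finset_sum
        intro i _
        by_cases hi : t + 1 ≤ (i : ℕ)
        · simp only [hi, if_true]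
          exact ((continuous_apply i).continuousAt).pow 2
        · simp only [hi, if_false]; exact continuousAt_const
      exact (h1.sub h2).add h3
    have hCclosed : IsClosed (K ∩ h ⁻¹' Iic 0) :=
      hcontOn.preimage_isClosed_of_isClosed hKclosed isClosed_Iic
    -- Ω ∩ ball x 1 ⊆ K ∩ h ⁻¹' Iic 0
    have hsub : Ω ∩ Metric.ball x 1 ⊆ K ∩ h ⁻¹' Iic 0 := by
      rintro y ⟨⟨hypos, hyh⟩, hyball⟩
      have hybd : ∀ j : Fin n, |y j - x j| < 1 := by
        intro j
        have := dist_le_pi_dist y x j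
        have h2 := Metric.mem_ball.mp hyball
        rw [Real.dist_eq] at this
        linarith
      have hyM : ∀ j : Fin n, y j < M := by
        intro j
        have h1 := hybd j
        have h2 : |x j| ≤ ‖x‖ := by
          have := norm_le_pi_norm x j
          simpa using this
        have := abs_lt.mp h1
        have := abs_le.mp (abs_le.mpr ⟨neg_le_of_abs_le h2, le_of_abs_le h2⟩)
        simp only [hM]
        cases abs_lt.mp h1 with
        | intro hl hr => cases abs_le.mp h2 with
          | intro hl2 hr2 => linarith
      have hyMneg : -M < y ⟨t, ht⟩ := by
        have h1 := abs_lt.mp (hybd ⟨t, ht⟩)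
        have h2 : |x ⟨t, ht⟩| ≤ ‖x‖ := norm_le_pi_norm x ⟨t, ht⟩
        have h3 := abs_le.mp h2
        simp only [hM]
        obtain ⟨hl, hr⟩ := h1
        obtain ⟨hl2, hr2⟩ := h3
        linarith
      -- sums
      set f : Fin n → ℝ := fun j => if (j : ℕ) < t then ψ j * Real.log (y j) else 0 with hf
      have hfle : ∀ j : Fin n, f j ≤ ψ j * L := by
        intro j
        by_cases hj : (j : ℕ) < t
        · simp only [hf, hj, if_true]
          apply mul_le_mul_of_nonneg_left _ (hψ0 j)
          calc Real.log (y j) ≤ Real.log M := Real.log_le_log (hypos j hj) (hyM j).le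
            _ ≤ L := le_max_left _ _
        · simp only [hf, hj, if_false]
          exact mul_nonneg (hψ0 j) hL0
      have hQ0 : 0 ≤ ∑ i : Fin n, (if t + 1 ≤ (i : ℕ) then (y i) ^ 2 else 0) :=
        Finset.sum_nonneg fun i _ => by positivity
      have hS : -M ≤ ∑ j : Fin n, f j := by
        have hyh' : -y ⟨t, ht⟩ - (∑ j : Fin n, f j)
            + (1/2) * ∑ i : Fin n, (if t + 1 ≤ (i : ℕ) then (y i) ^ 2 else 0) ≤ 0 := hyh
        clear_value M f
        linarith [hyM ⟨t, ht⟩, hQ0, hyh']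
      constructor
      · -- y ∈ K
        intro i hi
        have hψi := hpos i hi
        have key : -(M + T * L) ≤ ψ i * Real.log (y i) := by
          have hsplit : ∑ j : Fin n, f j =
              f i + ∑ j ∈ Finset.univ.erase i, f j := by
            rw [Finset.add_sum_erase _ _ (Finset.mem_univ i)]
          have hrest : ∑ j ∈ Finset.univ.erase i, f j ≤ T * L := by
            calc ∑ j ∈ Finset.univ.erase i, f j
                ≤ ∑ j ∈ Finset.univ.erase i, ψ j * L :=
                  Finset.sum_le_sum fun j _ => hfle j
              _ ≤ ∑ j : Fin n, ψ j * L := by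
                  apply Finset.sum_le_sum_of_subset_of_nonneg (Finset.erase_subset _ _)
                  intro j _ _
                  exact mul_nonneg (hψ0 j) hL0
              _ = T * L := by rw [hT, Finset.sum_mul]
          have hfi : f i = ψ i * Real.log (y i) := by simp [hf, hi]
          rw [hsplit, hfi] at hS
          linarith
        have hlog : -(M + T * L) / ψ i ≤ Real.log (y i) := by
          rw [div_le_iff₀ hψi] at *
          · nlinarith
        calc ε i = Real.exp (-(M + T * L) / ψ i) := rfl
          _ ≤ Real.exp (Real.log (y i)) := Real.exp_le_exp.mpr hlog
          _ = y i := Real.exp_log (hypos i hi)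
      · exact hyh
    -- conclude
    have hxC : x ∈ K ∩ h ⁻¹' Iic 0 := by
      have h1 : x ∈ Metric.ball x 1 ∩ closure Ω := ⟨Metric.mem_ball_self one_pos, hx⟩
      have h2 : x ∈ closure (Metric.ball x 1 ∩ Ω) :=
        Metric.isOpen_ball.inter_closure h1
      have h3 : closure (Metric.ball x 1 ∩ Ω) ⊆ K ∩ h ⁻¹' Iic 0 := by
        rw [← hCclosed.closure_eq]
        apply closure_mono
        intro y hy
        exact hsub ⟨hy.2, hy.1⟩
      exact h3 h2
    refine ⟨fun i hi => lt_of_lt_of_le (Real.exp_pos _) (hxC.1 i hi), hxC.2⟩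
  · -- Unboundedness
    intro hb
    obtain ⟨R, hR⟩ := isBounded_iff_forall_norm_le.mp hb
    set s : ℝ := max R 0 + 1 with hs
    set z : Fin n → ℝ := fun i => if (i : ℕ) < t then 1 else if (i : ℕ) = t then s else 0 with hz
    have hzΩ : z ∈ Ω := by
      constructor
      · intro i hi; simp [hz, hi]
      · show h z ≤ 0
        have h1 : z ⟨t, ht⟩ = s := by simp [hz]
        have h2 : ∑ i : Fin n, (if (i : ℕ) < t then ψ i * Real.log (z i) else 0) = 0 := by
          apply Finset.sum_eq_zero
          intro i _
          by_cases hi : (i : ℕ) < t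
          · simp [hz, hi]
          · simp [hi]
        have h3 : ∑ i : Fin n, (if t + 1 ≤ (i : ℕ) then (z i) ^ 2 else 0) = 0 := by
          apply Finset.sum_eq_zero
          intro i _
          by_cases hi : t + 1 ≤ (i : ℕ)
          · have h4 : ¬ ((i : ℕ) < t) := by omega
            have h5 : ¬ ((i : ℕ) = t) := by omega
            simp [hz, hi, h4, h5]
          · simp [hi]
        show -z ⟨t, ht⟩ - _ + _ ≤ 0
        rw [h1, h2, h3]
        have : 0 ≤ s := by simp [hs]; positivity
        linarith
    have := hR z hzΩ
    have h1 : |z ⟨t, ht⟩| ≤ ‖z‖ := norm_le_pi_norm z ⟨t, ht⟩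
    have h2 : z ⟨t, ht⟩ = s := by simp [hz]
    rw [h2] at h1
    have h3 : s ≤ R := le_trans (le_trans (le_abs_self s) h1) this
    have h4 : R ≤ max R 0 := le_max_left _ _
    simp only [hs] at h3
    linarith
  · -- Convexity
    rintro x ⟨hxpos, hxh⟩ y ⟨hypos, hyh⟩ a b ha hb hab
    have hzpos : ∀ i : Fin n, (i : ℕ) < t → 0 < a * x i + b * y i := by
      intro i hi
      rcases eq_or_lt_of_le ha with h0 | h0
      · have hb1 : b = 1 := by linarith
        simp [← h0, hb1, hypos i hi]
      · exact add_pos_of_pos_of_nonneg (mul_pos h0 (hxpos i hi))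
          (mul_nonneg hb (hypos i hi).le)
    refine ⟨fun i hi => by simpa using hzpos i hi, ?_⟩
    -- h (a•x + b•y) ≤ 0
    show h (a • x + b • y) ≤ 0
    have hz : ∀ i, (a • x + b • y) i = a * x i + b * y i := fun i => rfl
    -- log sums
    have hlogsum :
        a * (∑ i : Fin n, (if (i : ℕ) < t then ψ i * Real.log (x i) else 0))
        + b * (∑ i : Fin n, (if (i : ℕ) < t then ψ i * Real.log (y i) else 0))
        ≤ ∑ i : Fin n, (if (i : ℕ) < t then ψ i * Real.log ((a • x + b • y) i) else 0) := by
      rw [Finset.mul_sum, Finset.mul_sum, ← Finset.sum_add_distrib]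
      apply Finset.sum_le_sum
      intro i _
      by_cases hi : (i : ℕ) < t
      · simp only [hi, if_true, hz]
        have hconc := strictConcaveOn_log_Ioi.concaveOn.2
          (Set.mem_Ioi.mpr (hxpos i hi)) (Set.mem_Ioi.mpr (hypos i hi)) ha hb hab
        simp only [smul_eq_mul] at hconc
        nlinarith [hpos i hi, hconc]
      · simp [hi]
    -- square sums
    have hsqsum :
        ∑ i : Fin n, (if t + 1 ≤ (i : ℕ) then ((a • x + b • y) i) ^ 2 else 0)
        ≤ a * (∑ i : Fin n, (if t + 1 ≤ (i : ℕ) then (x i) ^ 2 else 0))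
        + b * (∑ i : Fin n, (if t + 1 ≤ (i : ℕ) then (y i) ^ 2 else 0)) := by
      rw [Finset.mul_sum, Finset.mul_sum, ← Finset.sum_add_distrib]
      apply Finset.sum_le_sum
      intro i _
      by_cases hi : t + 1 ≤ (i : ℕ)
      · simp only [hi, if_true, hz]
        nlinarith [sq_nonneg (x i - y i), mul_nonneg ha hb]
      · simp [hi]
    have hzt : (a • x + b • y) ⟨t, ht⟩ = a * x ⟨t, ht⟩ + b * y ⟨t, ht⟩ := rfl
    have hhx : h x ≤ 0 := hxh
    have hhy : h y ≤ 0 := hyh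
    simp only [h] at hhx hhy ⊢
    rw [hzt]
    nlinarith [hlogsum, hsqsum, hhx, hhy]
end

section
/- The sublevel set Ω = { x ∈ V : h(x) ≤ 0 } contains no complete affine line of ℝⁿ; that is, there is no point p and nonzero direction v such that p + s·v ∈ Ω for all s ∈ ℝ. -/
/-- The sublevel set `Ω = {x ∈ V : h(x) ≤ 0}` (type t < n) contains no
complete affine line: there is no point p and nonzero direction v with
p + s·v ∈ Ω for all s ∈ ℝ. -/
theorem sublevel_set_no_affine_line
    (n t : ℕ) (ht : t < n) (ψ : Fin n → ℝ)
    (hmono : ∀ i j : Fin n, i ≤ j → ψ j ≤ ψ i)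
    (hpos : ∀ i : Fin n, (i : ℕ) < t → 0 < ψ i)
    (hzero : ∀ i : Fin n, t ≤ (i : ℕ) → ψ i = 0) :
    let h : (Fin n → ℝ) → ℝ := fun x =>
      -x ⟨t, ht⟩
        - ∑ i : Fin n, (if (i : ℕ) < t then ψ i * Real.log (x i) else 0)
        + (1/2) * ∑ i : Fin n, (if t + 1 ≤ (i : ℕ) then (x i) ^ 2 else 0)
    let Ω : Set (Fin n → ℝ) := {x | (∀ i : Fin n, (i : ℕ) < t → 0 < x i) ∧ h x ≤ 0}
    ¬ ∃ (p v : Fin n → ℝ), v ≠ 0 ∧ ∀ s : ℝ, p + s • v ∈ Ω := by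
  intro h Ω
  rintro ⟨p, v, hv, hmem⟩
  simp only [Ω, h, Set.mem_setOf_eq, Pi.add_apply, Pi.smul_apply, smul_eq_mul] at hmem
  by_cases hc1 : ∃ j : Fin n, (j : ℕ) < t ∧ v j ≠ 0
  · obtain ⟨j, hjt, hvj⟩ := hc1
    have h0 := (hmem ((-1 - p j) / v j)).1 j hjt
    have hs : (-1 - p j) / v j * v j = -1 - p j := div_mul_cancel₀ _ hvj
    rw [hs] at h0
    linarith
  push_neg at hc1
  set L : ℝ := ∑ i : Fin n, (if (i : ℕ) < t then ψ i * Real.log (p i) else 0) with hL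
  set Q : ℝ := ∑ i : Fin n, (if t + 1 ≤ (i : ℕ) then (p i) ^ 2 else 0) with hQ
  set B : ℝ := ∑ i : Fin n, (if t + 1 ≤ (i : ℕ) then p i * v i else 0) with hB
  set A : ℝ := ∑ i : Fin n, (if t + 1 ≤ (i : ℕ) then (v i) ^ 2 else 0) with hA
  have hq : ∀ s : ℝ, -(p ⟨t, ht⟩ + s * v ⟨t, ht⟩) - L + (1/2) * (Q + 2*s*B + s^2*A) ≤ 0 := by
    intro s
    have h2 := (hmem s).2
    have hlog : ∑ i : Fin n, (if (i : ℕ) < t then ψ i * Real.log (p i + s * v i) else 0) = L := by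
      rw [hL]
      refine Finset.sum_congr rfl fun i _ => ?_
      by_cases hi : (i : ℕ) < t
      · simp [hi, hc1 i hi]
      · simp [hi]
    have hsq : ∑ i : Fin n, (if t + 1 ≤ (i : ℕ) then (p i + s * v i) ^ 2 else 0)
        = Q + 2*s*B + s^2*A := by
      have key : ∀ i : Fin n, (if t + 1 ≤ (i : ℕ) then (p i + s * v i) ^ 2 else 0)
          = (if t + 1 ≤ (i : ℕ) then (p i) ^ 2 else 0)
            + (2*s*(if t + 1 ≤ (i : ℕ) then p i * v i else 0)
              + s^2*(if t + 1 ≤ (i : ℕ) then (v i) ^ 2 else 0)) := by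
        intro i
        by_cases hi : t + 1 ≤ (i : ℕ) <;> simp [hi] <;> ring
      simp only [key, Finset.sum_add_distrib, ← Finset.mul_sum]
      ring
    rw [hlog, hsq] at h2
    linarith
  by_cases hc2 : ∃ j : Fin n, t + 1 ≤ (j : ℕ) ∧ v j ≠ 0
  · obtain ⟨j, hjt, hvj⟩ := hc2
    have hA0 : 0 < A := by
      have h1 : (if t + 1 ≤ (j : ℕ) then (v j) ^ 2 else 0) ≤ A := by
        rw [hA]
        exact Finset.single_le_sum (f := fun i : Fin n => if t + 1 ≤ (i : ℕ) then (v i) ^ 2 else 0)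
          (fun i _ => by positivity) (Finset.mem_univ j)
      rw [if_pos hjt] at h1
      have h2 : 0 < (v j) ^ 2 := (sq_nonneg _).lt_of_ne (Ne.symm (pow_ne_zero 2 hvj))
      linarith
    set D : ℝ := 2 * p ⟨t, ht⟩ + 2 * L - Q with hD
    set M : ℝ := (|D| + A + 1) / A with hM
    have hAM : A * M = |D| + A + 1 := by rw [hM]; field_simp
    have hM1 : 1 ≤ M := by
      rw [hM, le_div_iff₀ hA0]
      have := abs_nonneg D
      linarith
    have q1 := hq M
    have q2 := hq (-M)
    nlinarith [mul_nonneg (mul_nonneg hA0.le (by linarith : (0:ℝ) ≤ M))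
        (by linarith : (0:ℝ) ≤ M - 1), le_abs_self D]
  · push_neg at hc2
    have hvt : v ⟨t, ht⟩ ≠ 0 := by
      intro h0
      apply hv
      funext i
      rcases lt_trichotomy ((i : ℕ)) t with hi | hi | hi
      · exact hc1 i hi
      · have : i = ⟨t, ht⟩ := Fin.ext hi
        rw [this]; exact h0
      · exact hc2 i hi
    have hBz : B = 0 := by
      rw [hB]
      refine Finset.sum_eq_zero fun i _ => ?_
      by_cases hi : t + 1 ≤ (i : ℕ)
      · simp [hi, hc2 i hi]
      · simp [hi]
    have hAz : A = 0 := by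
      rw [hA]
      refine Finset.sum_eq_zero fun i _ => ?_
      by_cases hi : t + 1 ≤ (i : ℕ)
      · simp [hi, hc2 i hi]
      · simp [hi]
    have q := hq ((-(p ⟨t, ht⟩) - L + Q/2 - 1) / v ⟨t, ht⟩)
    rw [hBz, hAz, div_mul_cancel₀ _ hvt] at q
    linarith
end

section
/- Let t < n and for (X, Z, Y) ∈ ℝ^t × ℝ × ℝ^{n-t-1} define the affine map m(X,Z,Y) of ℝⁿ (in coordinates (x, z, y) ∈ ℝ^t × ℝ × ℝ^{n-t-1}) by m(X,Z,Y)(x,z,y) = (eˣ¹x₁, ..., e^{Xₜ}xₜ, z + Y·y + Z + ‖Y‖²/2, y + Y). Then h(m(X,Z,Y)(x,z,y)) = h(x,z,y) - (ψ^t(X) + Z), where ψ^t(X) = ∑_{i=1}^t ψᵢXᵢ. In particular, if Z = -ψ^t(X) then m(X,Z,Y) preserves every level set of h. -/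
/-- In coordinates `(x,z,y) ∈ ℝ^t × ℝ × ℝ^u` (u = n - t - 1), the affine
map `m(X,Z,Y)(x,z,y) = (e^{Xᵢ}xᵢ, z + Y·y + Z + ‖Y‖²/2, y + Y)` satisfies
`h(m(X,Z,Y)(x,z,y)) = h(x,z,y) - (ψ^t(X) + Z)`, where
`h(x,z,y) = -z - ∑ ψᵢ log xᵢ + ‖y‖²/2` and `ψ^t(X) = ∑ ψᵢ Xᵢ`.
In particular if `Z = -ψ^t(X)` then `m(X,Z,Y)` preserves every level set of `h`. -/
theorem enlarged_translation_shifts_horofunction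
    (t u : ℕ) (ψ : Fin t → ℝ)
    (hmono : ∀ i j : Fin t, i ≤ j → ψ j ≤ ψ i)
    (hpos : ∀ i : Fin t, 0 < ψ i) :
    let h : (Fin t → ℝ) × ℝ × (Fin u → ℝ) → ℝ := fun p =>
      -p.2.1 - ∑ i : Fin t, ψ i * Real.log (p.1 i) + (∑ j : Fin u, (p.2.2 j) ^ 2) / 2
    let m : (Fin t → ℝ) → ℝ → (Fin u → ℝ) →
        (Fin t → ℝ) × ℝ × (Fin u → ℝ) → (Fin t → ℝ) × ℝ × (Fin u → ℝ) :=
      fun X Z Y p =>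
        (fun i => Real.exp (X i) * p.1 i,
         p.2.1 + (∑ j : Fin u, Y j * p.2.2 j) + Z + (∑ j : Fin u, (Y j) ^ 2) / 2,
         fun j => p.2.2 j + Y j)
    ∀ (X : Fin t → ℝ) (Z : ℝ) (Y : Fin u → ℝ) (p : (Fin t → ℝ) × ℝ × (Fin u → ℝ)),
      (∀ i, 0 < p.1 i) →
        h (m X Z Y p) = h p - ((∑ i : Fin t, ψ i * X i) + Z) ∧
        (Z = -(∑ i : Fin t, ψ i * X i) → h (m X Z Y p) = h p) := by
  intro h m X Z Y p hp
  have key : h (m X Z Y p) = h p - ((∑ i : Fin t, ψ i * X i) + Z) := by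
    simp only [h, m]
    have hlog : ∀ i : Fin t, Real.log (Real.exp (X i) * p.1 i) = X i + Real.log (p.1 i) := by
      intro i
      rw [Real.log_mul (Real.exp_ne_zero _) (ne_of_gt (hp i)), Real.log_exp]
    have h1 : ∑ i : Fin t, ψ i * Real.log (Real.exp (X i) * p.1 i)
        = ∑ i : Fin t, ψ i * X i + ∑ i : Fin t, ψ i * Real.log (p.1 i) := by
      rw [← Finset.sum_add_distrib]
      exact Finset.sum_congr rfl fun i _ => by rw [hlog i]; ring
    have h2 : ∑ j : Fin u, (p.2.2 j + Y j) ^ 2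
        = ∑ j : Fin u, (p.2.2 j) ^ 2 + 2 * ∑ j : Fin u, Y j * p.2.2 j
          + ∑ j : Fin u, (Y j) ^ 2 := by
      have : ∑ j : Fin u, (p.2.2 j + Y j) ^ 2
          = ∑ j : Fin u, ((p.2.2 j) ^ 2 + 2 * (Y j * p.2.2 j) + (Y j) ^ 2) :=
        Finset.sum_congr rfl fun j _ => by ring
      rw [this, Finset.sum_add_distrib, Finset.sum_add_distrib, ← Finset.mul_sum]
    rw [h1, h2]; ring
  exact ⟨key, fun hZ => by rw [key, hZ]; ring⟩
end

section
/- The maps m(X,Z,Y) defined above form a group under composition isomorphic to (ℝⁿ, +): m(X,Z,Y) ∘ m(X',Z',Y') = m(X+X', Z+Z', Y+Y'), and this group acts simply transitively on V = (ℝ_{>0})^t × ℝ × ℝ^{n-t-1}. -/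
/-- The maps `m(X,Z,Y)` form a group under composition isomorphic to
`(ℝⁿ, +)`: `m(X,Z,Y) ∘ m(X',Z',Y') = m(X+X', Z+Z', Y+Y')`, and this group acts
simply transitively on `V = (ℝ_{>0})^t × ℝ × ℝ^u`. -/
theorem enlarged_translation_group_law_and_simply_transitive (t u : ℕ) :
    let m : (Fin t → ℝ) → ℝ → (Fin u → ℝ) →
        (Fin t → ℝ) × ℝ × (Fin u → ℝ) → (Fin t → ℝ) × ℝ × (Fin u → ℝ) :=
      fun X Z Y p =>
        (fun i => Real.exp (X i) * p.1 i,
         p.2.1 + (∑ j : Fin u, Y j * p.2.2 j) + Z + (∑ j : Fin u, (Y j) ^ 2) / 2,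
         fun j => p.2.2 j + Y j)
    (∀ (X X' : Fin t → ℝ) (Z Z' : ℝ) (Y Y' : Fin u → ℝ)
        (p : (Fin t → ℝ) × ℝ × (Fin u → ℝ)),
      m X Z Y (m X' Z' Y' p) = m (X + X') (Z + Z') (Y + Y') p) ∧
    (∀ p q : (Fin t → ℝ) × ℝ × (Fin u → ℝ),
      (∀ i, 0 < p.1 i) → (∀ i, 0 < q.1 i) →
        ∃! w : (Fin t → ℝ) × ℝ × (Fin u → ℝ), m w.1 w.2.1 w.2.2 p = q) := by
  intro m
  constructor
  · intro X X' Z Z' Y Y' p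
    refine Prod.ext ?_ (Prod.ext ?_ ?_)
    · funext i
      simp only [m, Pi.add_apply, Real.exp_add]
      ring
    · simp only [m, Pi.add_apply]
      have h1 : ∑ j : Fin u, (Y j + Y' j) * p.2.2 j
          = (∑ j : Fin u, Y j * p.2.2 j) + ∑ j : Fin u, Y' j * p.2.2 j := by
        rw [← Finset.sum_add_distrib]
        exact Finset.sum_congr rfl fun j _ => by ring
      have h2 : ∑ j : Fin u, (Y j + Y' j) ^ 2
          = (∑ j : Fin u, Y j ^ 2) + (∑ j : Fin u, Y' j ^ 2)
            + 2 * ∑ j : Fin u, Y j * Y' j := by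
        rw [Finset.mul_sum, ← Finset.sum_add_distrib, ← Finset.sum_add_distrib]
        exact Finset.sum_congr rfl fun j _ => by ring
      have h3 : ∑ j : Fin u, Y j * (p.2.2 j + Y' j)
          = (∑ j : Fin u, Y j * p.2.2 j) + ∑ j : Fin u, Y j * Y' j := by
        rw [← Finset.sum_add_distrib]
        exact Finset.sum_congr rfl fun j _ => by ring
      rw [h1, h2, h3]
      ring
    · funext j
      simp only [m, Pi.add_apply]
      ring
  · intro p q hp hq
    set Y : Fin u → ℝ := fun j => q.2.2 j - p.2.2 j with hY
    refine ⟨(fun i => Real.log (q.1 i / p.1 i),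
        q.2.1 - p.2.1 - (∑ j : Fin u, Y j * p.2.2 j) - (∑ j : Fin u, Y j ^ 2) / 2,
        Y), ?_, ?_⟩
    · refine Prod.ext ?_ (Prod.ext ?_ ?_)
      · funext i
        simp only [m]
        rw [Real.exp_log (div_pos (hq i) (hp i)), div_mul_cancel₀ _ (hp i).ne']
      · simp only [m]; ring
      · funext j
        simp only [m, hY]; ring
    · rintro ⟨X', Z', Y'⟩ h
      have h1 := congrArg Prod.fst h
      have h2 := congrArg (fun r => r.2.1) h
      have h3 := congrArg (fun r => r.2.2) h
      simp only [m] at h1 h2 h3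
      have hY' : Y' = Y := by
        funext j
        have := congrFun h3 j
        simp only [hY]
        linarith [this]
      subst hY'
      refine Prod.ext ?_ (Prod.ext ?_ rfl)
      · funext i
        have := congrFun h1 i
        have hx : Real.exp (X' i) = q.1 i / p.1 i := by
          rw [eq_div_iff (hp i).ne']; exact this
        show X' i = Real.log (q.1 i / p.1 i)
        rw [← hx, Real.log_exp]
      · show Z' = _
        linarith [h2]
end

section
/- The translation group T(ψ) = { m(X, -ψ^t(X), Y) : X ∈ ℝ^t, Y ∈ ℝ^{n-t-1} } acts simply transitively on the horosphere ∂Ω = { x ∈ V : h(x) = 0 }. -/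
/-!
The map `m(X, Z, Y)` shifts `h` by `-Z - ψ^t(X)`, so `T(ψ)` preserves every level set of `h`.
On `V` the `x`- and `y`-coordinates of `m(X, Z, Y) p` determine `X` and `Y` uniquely (via `log`
and subtraction), and on a level set of `h` the `z`-coordinate is determined by the other two;
hence there is exactly one element of `T(ψ)` carrying `p` to `q`.
-/

open Real

variable {ι κ : Type*} [Fintype κ]

noncomputable def horoFunction [Fintype ι] (ψ : ι → ℝ) (p : (ι → ℝ) × ℝ × (κ → ℝ)) : ℝ :=
  -p.2.1 - ∑ i, ψ i * log (p.1 i) + (∑ j, (p.2.2 j) ^ 2) / 2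

noncomputable def enlargedTranslation (X : ι → ℝ) (Z : ℝ) (Y : κ → ℝ)
    (p : (ι → ℝ) × ℝ × (κ → ℝ)) : (ι → ℝ) × ℝ × (κ → ℝ) :=
  (fun i => exp (X i) * p.1 i,
   p.2.1 + (∑ j, Y j * p.2.2 j) + Z + (∑ j, (Y j) ^ 2) / 2,
   fun j => p.2.2 j + Y j)

lemma enlargedTranslation_fst_pos (X : ι → ℝ) (Z : ℝ) (Y : κ → ℝ)
    {p : (ι → ℝ) × ℝ × (κ → ℝ)} (hp : ∀ i, 0 < p.1 i) (i : ι) :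
    0 < (enlargedTranslation X Z Y p).1 i :=
  mul_pos (exp_pos _) (hp i)

lemma horoFunction_enlargedTranslation [Fintype ι] (ψ : ι → ℝ) (X : ι → ℝ) (Z : ℝ) (Y : κ → ℝ)
    {p : (ι → ℝ) × ℝ × (κ → ℝ)} (hp : ∀ i, 0 < p.1 i) :
    horoFunction ψ (enlargedTranslation X Z Y p) = horoFunction ψ p - Z - ∑ i, ψ i * X i := by
  have hlog : ∀ i, log (exp (X i) * p.1 i) = X i + log (p.1 i) := fun i => by
    rw [log_mul (exp_ne_zero _) (hp i).ne', log_exp]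
  have hsq : ∑ j, (p.2.2 j + Y j) ^ 2
      = ∑ j, p.2.2 j ^ 2 + 2 * ∑ j, Y j * p.2.2 j + ∑ j, Y j ^ 2 := by
    simp only [Finset.mul_sum, ← Finset.sum_add_distrib]
    exact Finset.sum_congr rfl fun j _ => by ring
  simp only [horoFunction, enlargedTranslation, hlog, mul_add, Finset.sum_add_distrib, hsq]
  ring

lemma enlargedTranslation_fst_eq_iff (X : ι → ℝ) (Z : ℝ) (Y : κ → ℝ)
    {p q : (ι → ℝ) × ℝ × (κ → ℝ)} (hp : ∀ i, 0 < p.1 i) (hq : ∀ i, 0 < q.1 i) :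
    (enlargedTranslation X Z Y p).1 = q.1 ↔ X = fun i => log (q.1 i) - log (p.1 i) := by
  simp only [enlargedTranslation, funext_iff]
  refine forall_congr' fun i => ?_
  rw [← log_exp (X i), eq_sub_iff_add_eq, ← log_mul (exp_ne_zero _) (hp i).ne',
    log_injOn_pos.eq_iff (mul_pos (exp_pos _) (hp i)) (hq i), log_exp]

lemma enlargedTranslation_snd_snd_eq_iff (X : ι → ℝ) (Z : ℝ) (Y : κ → ℝ)
    {p q : (ι → ℝ) × ℝ × (κ → ℝ)} :
    (enlargedTranslation X Z Y p).2.2 = q.2.2 ↔ Y = q.2.2 - p.2.2 := by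
  simp only [enlargedTranslation, funext_iff, Pi.sub_apply]
  exact forall_congr' fun j => by constructor <;> intro h <;> linarith

lemma eq_of_horoFunction_eq [Fintype ι] {ψ : ι → ℝ} {p q : (ι → ℝ) × ℝ × (κ → ℝ)}
    (h1 : p.1 = q.1) (h3 : p.2.2 = q.2.2) (hh : horoFunction ψ p = horoFunction ψ q) :
    p = q := by
  obtain ⟨x, z, y⟩ := p
  obtain ⟨x', z', y'⟩ := q
  dsimp only at h1 h3
  subst h1 h3
  simp only [horoFunction] at hh
  simp only [Prod.mk.injEq, true_and, and_true]
  linarith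

theorem translation_group_simply_transitive_on_horosphere_general
    (t u : ℕ) (ψ : Fin t → ℝ) :
    let h : (Fin t → ℝ) × ℝ × (Fin u → ℝ) → ℝ := fun p =>
      -p.2.1 - ∑ i : Fin t, ψ i * Real.log (p.1 i) + (∑ j : Fin u, (p.2.2 j) ^ 2) / 2
    let m : (Fin t → ℝ) → ℝ → (Fin u → ℝ) →
        (Fin t → ℝ) × ℝ × (Fin u → ℝ) → (Fin t → ℝ) × ℝ × (Fin u → ℝ) :=
      fun X Z Y p =>
        (fun i => Real.exp (X i) * p.1 i,
         p.2.1 + (∑ j : Fin u, Y j * p.2.2 j) + Z + (∑ j : Fin u, (Y j) ^ 2) / 2,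
         fun j => p.2.2 j + Y j)
    ∀ p q : (Fin t → ℝ) × ℝ × (Fin u → ℝ),
      (∀ i, 0 < p.1 i) → h p = 0 → (∀ i, 0 < q.1 i) → h q = 0 →
        (∀ (X : Fin t → ℝ) (Y : Fin u → ℝ),
          (∀ i, 0 < (m X (-(∑ i : Fin t, ψ i * X i)) Y p).1 i) ∧
          h (m X (-(∑ i : Fin t, ψ i * X i)) Y p) = 0) ∧
        (∃! w : (Fin t → ℝ) × (Fin u → ℝ),
          m w.1 (-(∑ i : Fin t, ψ i * w.1 i)) w.2 p = q) := by
  intro h m p q hp hhp hq hhq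
  have invariant (X : Fin t → ℝ) (Y : Fin u → ℝ) :
      horoFunction ψ (enlargedTranslation X (-∑ i, ψ i * X i) Y p) = 0 := by
    rw [horoFunction_enlargedTranslation ψ X _ Y hp, show horoFunction ψ p = 0 from hhp]
    ring
  refine ⟨fun X Y => ⟨enlargedTranslation_fst_pos X _ Y hp, invariant X Y⟩, ?_⟩
  refine ⟨(fun i => log (q.1 i) - log (p.1 i), q.2.2 - p.2.2), ?_, ?_⟩
  · exact eq_of_horoFunction_eq ((enlargedTranslation_fst_eq_iff _ _ _ hp hq).mpr rfl)
      ((enlargedTranslation_snd_snd_eq_iff _ _ _).mpr rfl) ((invariant _ _).trans hhq.symm)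
  · rintro ⟨X, Y⟩ hw
    exact Prod.ext ((enlargedTranslation_fst_eq_iff _ _ _ hp hq).mp (congrArg Prod.fst hw))
      ((enlargedTranslation_snd_snd_eq_iff _ _ _).mp (congrArg (·.2.2) hw))

/-- The translation group `T(ψ) = { m(X, -ψ^t(X), Y) }` preserves the
horosphere `∂Ω = {v ∈ V : h v = 0}` and acts simply transitively on it. -/
theorem translation_group_simply_transitive_on_horosphere
    (t u : ℕ) (ψ : Fin t → ℝ)
    (hmono : ∀ i j : Fin t, i ≤ j → ψ j ≤ ψ i)
    (hpos : ∀ i : Fin t, 0 < ψ i) :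
    let h : (Fin t → ℝ) × ℝ × (Fin u → ℝ) → ℝ := fun p =>
      -p.2.1 - ∑ i : Fin t, ψ i * Real.log (p.1 i) + (∑ j : Fin u, (p.2.2 j) ^ 2) / 2
    let m : (Fin t → ℝ) → ℝ → (Fin u → ℝ) →
        (Fin t → ℝ) × ℝ × (Fin u → ℝ) → (Fin t → ℝ) × ℝ × (Fin u → ℝ) :=
      fun X Z Y p =>
        (fun i => Real.exp (X i) * p.1 i,
         p.2.1 + (∑ j : Fin u, Y j * p.2.2 j) + Z + (∑ j : Fin u, (Y j) ^ 2) / 2,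
         fun j => p.2.2 j + Y j)
    ∀ p q : (Fin t → ℝ) × ℝ × (Fin u → ℝ),
      (∀ i, 0 < p.1 i) → h p = 0 → (∀ i, 0 < q.1 i) → h q = 0 →
        (∀ (X : Fin t → ℝ) (Y : Fin u → ℝ),
          (∀ i, 0 < (m X (-(∑ i : Fin t, ψ i * X i)) Y p).1 i) ∧
          h (m X (-(∑ i : Fin t, ψ i * X i)) Y p) = 0) ∧
        (∃! w : (Fin t → ℝ) × (Fin u → ℝ),
          m w.1 (-(∑ i : Fin t, ψ i * w.1 i)) w.2 p = q) :=
  translation_group_simply_transitive_on_horosphere_general t u ψ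
end

section
/- Define β on V by β(w) = D²h(π(w)) + (Dh(w))² where π : T_qV → T_q{h = h(q)} is projection along the radial flow direction e_{t+1} (t < n). Then β is a Riemannian metric on V (a positive definite quadratic form at each point), every element of the translation group T(ψ) acts by isometries of β, and the radial flow Φ_s(x,z,y) = (x, z-s, y) acts by isometries of β. -/
/-- Define `β_q(w) = D²h_q(π w) + (Dh_q w)²`, where `π` is the projection
along the radial direction `e_{t+1}` onto the tangent space of the horosphere through q.
Since `D²h` does not involve the z-component, `D²h_q(π w) = D²h_q(w)`, so
`β_q(w) = ∑ ψᵢ (qᵢ)⁻² wᵢ² + ∑ w_{yⱼ}² + (Dh_q w)²`.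
Then β is a Riemannian metric (positive definite at each point of V), every element of
the translation group `T(ψ)` acts by isometries of β (with derivative
`Dm(w) = (e^{Xᵢ} wᵢ, w_z + Y·w_y, w_y)`), and the radial flow
`Φ_s(x,z,y) = (x, z - s, y)` acts by isometries of β. -/
theorem beta_riemannian_and_invariant
    (t u : ℕ) (ψ : Fin t → ℝ)
    (hmono : ∀ i j : Fin t, i ≤ j → ψ j ≤ ψ i)
    (hpos : ∀ i : Fin t, 0 < ψ i) :
    let Dh : ((Fin t → ℝ) × ℝ × (Fin u → ℝ)) → ((Fin t → ℝ) × ℝ × (Fin u → ℝ)) → ℝ :=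
      fun q w =>
        -w.2.1 - ∑ i : Fin t, ψ i * (q.1 i)⁻¹ * w.1 i + ∑ j : Fin u, q.2.2 j * w.2.2 j
    let β : ((Fin t → ℝ) × ℝ × (Fin u → ℝ)) → ((Fin t → ℝ) × ℝ × (Fin u → ℝ)) → ℝ :=
      fun q w =>
        (∑ i : Fin t, ψ i * ((q.1 i)⁻¹) ^ 2 * (w.1 i) ^ 2 + ∑ j : Fin u, (w.2.2 j) ^ 2)
          + (Dh q w) ^ 2
    let m : (Fin t → ℝ) → (Fin u → ℝ) →
        (Fin t → ℝ) × ℝ × (Fin u → ℝ) → (Fin t → ℝ) × ℝ × (Fin u → ℝ) :=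
      fun X Y p =>
        (fun i => Real.exp (X i) * p.1 i,
         p.2.1 + (∑ j : Fin u, Y j * p.2.2 j) + (-(∑ i : Fin t, ψ i * X i))
           + (∑ j : Fin u, (Y j) ^ 2) / 2,
         fun j => p.2.2 j + Y j)
    let Dm : (Fin t → ℝ) → (Fin u → ℝ) →
        (Fin t → ℝ) × ℝ × (Fin u → ℝ) → (Fin t → ℝ) × ℝ × (Fin u → ℝ) :=
      fun X Y w =>
        (fun i => Real.exp (X i) * w.1 i,
         w.2.1 + ∑ j : Fin u, Y j * w.2.2 j,
         w.2.2)
    (∀ q : (Fin t → ℝ) × ℝ × (Fin u → ℝ), (∀ i, 0 < q.1 i) →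
      ∀ w : (Fin t → ℝ) × ℝ × (Fin u → ℝ), w ≠ 0 → 0 < β q w) ∧
    (∀ (X : Fin t → ℝ) (Y : Fin u → ℝ) (q w : (Fin t → ℝ) × ℝ × (Fin u → ℝ)),
      (∀ i, 0 < q.1 i) → β (m X Y q) (Dm X Y w) = β q w) ∧
    (∀ (s : ℝ) (q w : (Fin t → ℝ) × ℝ × (Fin u → ℝ)), (∀ i, 0 < q.1 i) →
      β (q.1, q.2.1 - s, q.2.2) w = β q w) := by
  intro Dh β m Dm
  have hS1 : ∀ (q w : (Fin t → ℝ) × ℝ × (Fin u → ℝ)),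
      0 ≤ ∑ i : Fin t, ψ i * ((q.1 i)⁻¹) ^ 2 * (w.1 i) ^ 2 := by
    intro q w
    apply Finset.sum_nonneg
    intro i _
    have := (hpos i).le
    positivity
  have hS2 : ∀ (w : (Fin t → ℝ) × ℝ × (Fin u → ℝ)), 0 ≤ ∑ j : Fin u, (w.2.2 j) ^ 2 := by
    intro w; apply Finset.sum_nonneg; intro j _; positivity
  refine ⟨?_, ?_, ?_⟩
  · -- positive definiteness
    intro q hq w hw
    by_cases h1 : w.1 = 0
    · by_cases h2 : w.2.2 = 0
      · have hz : w.2.1 ≠ 0 := by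
          intro hz
          exact hw (Prod.ext h1 (Prod.ext hz h2))
        have hDh : Dh q w = -w.2.1 := by
          simp only [Dh, h1, h2]
          simp
        have hsq : 0 < (Dh q w) ^ 2 := by
          rw [hDh]
          exact lt_of_le_of_ne (sq_nonneg _) (Ne.symm (pow_ne_zero 2 (neg_ne_zero.mpr hz)))
        exact add_pos_of_nonneg_of_pos (add_nonneg (hS1 q w) (hS2 w)) hsq
      · obtain ⟨j, hj⟩ := Function.ne_iff.mp h2
        have hpos2 : 0 < ∑ j : Fin u, (w.2.2 j) ^ 2 := by
          refine Finset.sum_pos' (fun j _ => sq_nonneg _) ⟨j, Finset.mem_univ j, ?_⟩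
          exact lt_of_le_of_ne (sq_nonneg _) (Ne.symm (pow_ne_zero 2 hj))
        exact add_pos_of_pos_of_nonneg
          (add_pos_of_nonneg_of_pos (hS1 q w) hpos2) (sq_nonneg _)
    · obtain ⟨i, hi⟩ := Function.ne_iff.mp h1
      have hpos1 : 0 < ∑ i : Fin t, ψ i * ((q.1 i)⁻¹) ^ 2 * (w.1 i) ^ 2 := by
        refine Finset.sum_pos' (fun i _ => by have := (hpos i).le; positivity)
          ⟨i, Finset.mem_univ i, ?_⟩
        exact mul_pos (mul_pos (hpos i) (pow_pos (inv_pos.mpr (hq i)) 2))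
          (lt_of_le_of_ne (sq_nonneg _) (Ne.symm (pow_ne_zero 2 hi)))
      exact add_pos_of_pos_of_nonneg
        (add_pos_of_pos_of_nonneg hpos1 (hS2 w)) (sq_nonneg _)
  · -- translation invariance
    intro X Y q w hq
    have he : ∀ i : Fin t, (Real.exp (X i))⁻¹ * Real.exp (X i) = 1 :=
      fun i => inv_mul_cancel₀ (Real.exp_ne_zero _)
    have hDh : Dh (m X Y q) (Dm X Y w) = Dh q w := by
      simp only [Dh, Dm, m]
      have h1 : ∀ i : Fin t,
          ψ i * (Real.exp (X i) * q.1 i)⁻¹ * (Real.exp (X i) * w.1 i)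
            = ψ i * (q.1 i)⁻¹ * w.1 i := by
        intro i
        rw [mul_inv]
        linear_combination ψ i * (q.1 i)⁻¹ * w.1 i * he i
      rw [Finset.sum_congr rfl (fun i _ => h1 i)]
      have h2 : ∀ j : Fin u, (q.2.2 j + Y j) * w.2.2 j
          = q.2.2 j * w.2.2 j + Y j * w.2.2 j := fun j => by ring
      rw [Finset.sum_congr rfl (fun j _ => h2 j), Finset.sum_add_distrib]
      ring
    have hx : ∑ i : Fin t, ψ i * (((m X Y q).1 i)⁻¹) ^ 2 * ((Dm X Y w).1 i) ^ 2
        = ∑ i : Fin t, ψ i * ((q.1 i)⁻¹) ^ 2 * (w.1 i) ^ 2 := by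
      apply Finset.sum_congr rfl
      intro i _
      simp only [Dm, m]
      rw [mul_inv]
      have he2 : ((Real.exp (X i))⁻¹) ^ 2 * (Real.exp (X i)) ^ 2 = 1 := by
        rw [← mul_pow, he i, one_pow]
      linear_combination ψ i * ((q.1 i)⁻¹) ^ 2 * (w.1 i) ^ 2 * he2
    have hy : ∑ j : Fin u, ((Dm X Y w).2.2 j) ^ 2 = ∑ j : Fin u, (w.2.2 j) ^ 2 := rfl
    simp only [β]
    rw [hDh, hx, hy]
  · -- radial flow invariance
    intro s q w hq
    rfl
end
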